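/- arXiv:1004.3833 — 2 statements merged into one kernel-verified Lean document; each statement's English description precedes it below -/
import Mathlib

section
/- Holant Theorem (Valiant's special case): Let G = (V, E_int, ∅, f_V) be an NFG with no external edges, so that Z_G is a scalar. For each internal edge e with endpoints u and v, let Y_e be a finite alphabet and let Φ_{u,e}, Φ_{v,e} : X_e × Y_e → ℂ be dual with respect to the coupling alphabet Y_e. For each vertex v define F_v(y_{E(v)}) := ∑_{x_{E(v)}} f_v(x_{E(v)}) · ∏_{e∈E(v)} Φ_{v,e}(x_e, y_e), and let G^H := (V, E_int, ∅, F_V). Then the scalars Z_{G^H} and Z_G are equal: ∑_{y_{E_int}} ∏_{v∈V} F_v(y_{E(v)}) = ∑_{x_{E_int}} ∏_{v∈V} f_v(x_{E(v)}). -/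
open scoped BigOperators Classical

/-! # Normal factor graphs (see the NFG definitions below) -/

/-- `Inc ends extEnd v e` means edge `e` is incident to vertex `v`. -/
def Inc {V Ei Ee : Type} (ends : Ei → V × V) (extEnd : Ee → V) (v : V) :
    Ei ⊕ Ee → Prop
  | .inl i => (ends i).1 = v ∨ (ends i).2 = v
  | .inr j => extEnd j = v

/-- Combine an internal and an external configuration into a configuration on all edges. -/
def combine {Ei Ee : Type} {X : Ei ⊕ Ee → Type}
    (xi : ∀ i : Ei, X (.inl i)) (xe : ∀ j : Ee, X (.inr j)) : ∀ e, X e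
  | .inl i => xi i
  | .inr j => xe j

/-- The exterior function realized by a normal factor graph. -/
noncomputable def Zfun {V Ei Ee : Type} [Fintype V] [Fintype Ei]
    (X : Ei ⊕ Ee → Type) [∀ e, Fintype (X e)]
    (ends : Ei → V × V) (extEnd : Ee → V)
    (f : ∀ v : V, ((e : {e : Ei ⊕ Ee // Inc ends extEnd v e}) → X e.1) → ℂ)
    (xe : ∀ j : Ee, X (.inr j)) : ℂ :=
  ∑ xi : ∀ i : Ei, X (.inl i), ∏ v : V, f v fun e => combine xi xe e.1

/-!
Expanding each transformed local function `F v` writes `Z_{G^H}` as a sum over *local*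
configurations `g`, which assign to every vertex its own copy of the symbols on its incident
edges. For fixed `g` the product of all transformers factors over edges, since each internal
edge has exactly two distinct endpoints, and summing out the coupling symbol of an edge gives,
by duality, the indicator that its two copies agree. The surviving local configurations are
exactly the local views of global configurations, which leaves `Z_G`.
-/

section Holant

variable {V Ei : Type} (ends : Ei → V × V) (extEnd : Empty → V)

def edgeAtFst (i : Ei) : {e : Ei ⊕ Empty // Inc ends extEnd (ends i).1 e} :=
  ⟨.inl i, Or.inl rfl⟩

def edgeAtSnd (i : Ei) : {e : Ei ⊕ Empty // Inc ends extEnd (ends i).2 e} :=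
  ⟨.inl i, Or.inr rfl⟩

abbrev LocalConfig (X : Ei ⊕ Empty → Type) : Type :=
  ∀ v : V, (e : {e : Ei ⊕ Empty // Inc ends extEnd v e}) → X e.1

def localView {X : Ei ⊕ Empty → Type} (x : ∀ i : Ei, X (.inl i)) : LocalConfig ends extEnd X :=
  fun _ e => combine x (fun j => j.elim) e.1

def IsEdgeConsistent {X : Ei ⊕ Empty → Type} (g : LocalConfig ends extEnd X) : Prop :=
  ∀ i : Ei, g (ends i).1 (edgeAtFst ends extEnd i)
    = g (ends i).2 (edgeAtSnd ends extEnd i)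

noncomputable def incidenceEquiv (hne : ∀ i : Ei, (ends i).1 ≠ (ends i).2) :
    (Ei × Bool) ≃ (Σ v : V, {e : Ei ⊕ Empty // Inc ends extEnd v e}) where
  toFun
    | (i, false) => ⟨(ends i).1, edgeAtFst ends extEnd i⟩
    | (i, true) => ⟨(ends i).2, edgeAtSnd ends extEnd i⟩
  invFun
    | ⟨v, ⟨.inl i, _⟩⟩ => (i, decide ((ends i).2 = v))
    | ⟨_, ⟨.inr j, _⟩⟩ => j.elim
  left_inv := by
    rintro ⟨i, _ | _⟩
    · simp [edgeAtFst, (hne i).symm]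
    · simp [edgeAtSnd]
  right_inv := by
    rintro ⟨v, ⟨_ | j, hv⟩⟩
    · rcases hv with rfl | rfl <;> simp [edgeAtFst, edgeAtSnd, (hne _).symm]
    · exact j.elim

theorem prod_incident_eq_prod_ends {M : Type*} [CommMonoid M] [Fintype V] [Fintype Ei]
    (hne : ∀ i : Ei, (ends i).1 ≠ (ends i).2)
    (h : ∀ v : V, {e : Ei ⊕ Empty // Inc ends extEnd v e} → M) :
    ∏ v, ∏ e, h v e
      = ∏ i, h (ends i).1 (edgeAtFst ends extEnd i) * h (ends i).2 (edgeAtSnd ends extEnd i) := by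
  rw [← Fintype.prod_sigma (fun p : Σ v, {e // Inc ends extEnd v e} => h p.1 p.2)]
  rw [← (incidenceEquiv ends extEnd hne).prod_comp, Fintype.prod_prod_type]
  refine Finset.prod_congr rfl fun i _ => ?_
  rw [Fintype.prod_bool, mul_comm]
  rfl

variable {X : Ei ⊕ Empty → Type}

theorem localView_injective : Function.Injective (localView ends extEnd (X := X)) := by
  intro x x' hxx'
  funext i
  exact congrFun (congrFun hxx' (ends i).1) (edgeAtFst ends extEnd i)

theorem isEdgeConsistent_iff_mem_range_localView (g : LocalConfig ends extEnd X) :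
    IsEdgeConsistent ends extEnd g ↔ g ∈ Set.range (localView ends extEnd) := by
  constructor
  · intro hg
    refine ⟨fun i => g (ends i).1 (edgeAtFst ends extEnd i), ?_⟩
    funext v e
    obtain ⟨_ | j, hv⟩ := e
    · rcases hv with rfl | rfl
      exacts [rfl, hg _]
    · exact j.elim
  · rintro ⟨x, rfl⟩ i
    rfl

theorem sum_ite_isEdgeConsistent {M : Type*} [AddCommMonoid M] [Fintype V] [Fintype Ei]
    [∀ e, Fintype (X e)] (h : LocalConfig ends extEnd X → M) :
    ∑ g, (if IsEdgeConsistent ends extEnd g then h g else 0)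
      = ∑ x, h (localView ends extEnd x) := by
  rw [← Finset.sum_filter, ← Finset.sum_image (localView_injective ends extEnd).injOn]
  congr
  ext g
  simp [isEdgeConsistent_iff_mem_range_localView]

theorem sum_prod_dual_localView [Fintype V] [Fintype Ei] {Y : Ei ⊕ Empty → Type}
    [∀ e, Fintype (Y e)] (hne : ∀ i : Ei, (ends i).1 ≠ (ends i).2)
    (Φ : V → ∀ e : Ei ⊕ Empty, X e → Y e → ℂ)
    (hdual : ∀ i : Ei, ∀ x x' : X (.inl i),
      ∑ y : Y (.inl i), Φ (ends i).1 (.inl i) x y * Φ (ends i).2 (.inl i) x' y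
        = if x = x' then 1 else 0)
    (g : LocalConfig ends extEnd X) :
    ∑ y : ∀ i : Ei, Y (.inl i), ∏ v, ∏ e, Φ v e.1 (g v e) (localView ends extEnd y v e)
      = if IsEdgeConsistent ends extEnd g then 1 else 0 := by
  calc _ = ∏ i, ∑ y, Φ (ends i).1 (.inl i) (g (ends i).1 (edgeAtFst ends extEnd i)) y *
              Φ (ends i).2 (.inl i) (g (ends i).2 (edgeAtSnd ends extEnd i)) y := by
        simp_rw [prod_incident_eq_prod_ends ends extEnd hne]
        rw [Fintype.prod_sum]
        rfl
    _ = ∏ i, if g (ends i).1 (edgeAtFst ends extEnd i)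
          = g (ends i).2 (edgeAtSnd ends extEnd i) then 1 else 0 :=
        Finset.prod_congr rfl fun i _ => hdual i _ _
    _ = _ := by
        rw [Fintype.prod_boole]
        congr

end Holant

/-- **Holant Theorem** (Valiant's special case of the generalized Holant theorem).
Let `G = (V, Ei, ∅, f)` be an NFG with no external edges, so its exterior function is a
scalar.  For each internal edge `i` with endpoints `u, v`, let `Φ u (.inl i)` and
`Φ v (.inl i)` be dual with respect to the coupling alphabet `Y (.inl i)`, and let `F v` be
the local transform of `f v` by its surrounding transformers.  Then the scalars realized by
`G^H = (V, Ei, ∅, F)` and by `G` coincide. -/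
theorem holant_theorem {V Ei : Type}
    [Fintype V] [Fintype Ei]
    (X Y : Ei ⊕ Empty → Type) [∀ e, Fintype (X e)] [∀ e, Fintype (Y e)]
    (ends : Ei → V × V) (hne : ∀ i : Ei, (ends i).1 ≠ (ends i).2)
    (extEnd : Empty → V)
    (f : ∀ v : V, ((e : {e : Ei ⊕ Empty // Inc ends extEnd v e}) → X e.1) → ℂ)
    (Φ : ∀ v : V, ∀ e : Ei ⊕ Empty, X e → Y e → ℂ)
    (hdual : ∀ i : Ei, ∀ x x' : X (.inl i),
      ∑ y : Y (.inl i), Φ (ends i).1 (.inl i) x y * Φ (ends i).2 (.inl i) x' y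
        = if x = x' then 1 else 0)
    (F : ∀ v : V, ((e : {e : Ei ⊕ Empty // Inc ends extEnd v e}) → Y e.1) → ℂ)
    (hF : ∀ v yv, F v yv =
      ∑ xv : (e : {e : Ei ⊕ Empty // Inc ends extEnd v e}) → X e.1,
        f v xv * ∏ e : {e : Ei ⊕ Empty // Inc ends extEnd v e}, Φ v e.1 (xv e) (yv e)) :
    Zfun Y ends extEnd F (fun j => j.elim)
      = Zfun X ends extEnd f (fun j => j.elim) := by
  calc Zfun Y ends extEnd F (fun j => j.elim)
      = ∑ y, ∏ v, F v (localView ends extEnd y v) := rfl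
    _ = ∑ y, ∑ g : LocalConfig ends extEnd X,
          ∏ v, (f v (g v) * ∏ e, Φ v e.1 (g v e) (localView ends extEnd y v e)) := by
        simp_rw [hF, Fintype.prod_sum]
    _ = ∑ g : LocalConfig ends extEnd X, (∏ v, f v (g v)) *
          ∑ y, ∏ v, ∏ e, Φ v e.1 (g v e) (localView ends extEnd y v e) := by
        rw [Finset.sum_comm]
        simp_rw [Finset.prod_mul_distrib, Finset.mul_sum]
    _ = ∑ g : LocalConfig ends extEnd X,
          if IsEdgeConsistent ends extEnd g then ∏ v, f v (g v) else 0 := by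
        simp_rw [sum_prod_dual_localView ends extEnd hne Φ hdual, mul_ite, mul_one, mul_zero]
    _ = Zfun X ends extEnd f (fun j => j.elim) :=
        sum_ite_isEdgeConsistent ends extEnd _
end

section
/- General Normal Factor Graph Duality Theorem: Let G = (V, E_int, E_ext, f_V) be an NFG in which every edge alphabet X_e is a finite abelian group. Form the dual NFG Ĝ as follows: each edge e now carries the character group X_e^∧; each local function f_v is replaced by its Fourier transform F[f_v] : ∏_{e∈E(v)} X_e^∧ → ℂ, F[f_v](x̂_{E(v)}) := ∑_{x_{E(v)}} f_v(x_{E(v)}) · ∏_{e∈E(v)} x̂_e(x_e); and into each internal edge e a new vertex is inserted carrying the local function δ_+ : X_e^∧ × X_e^∧ → ℂ, where δ_+(x̂, x̂') = 1 if x̂ + x̂' = 0 and 0 otherwise. Then Z_Ĝ = |X_{E_int}| · F[Z_G], where |X_{E_int}| := ∏_{e∈E_int} |X_e| and F[Z_G](x̂_{E_ext}) := ∑_{x_{E_ext}} Z_G(x_{E_ext}) · ∏_{e∈E_ext} x̂_e(x_e). -/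
open scoped BigOperators Classical

/-! ## The dual NFG

The dual NFG `Ĝ` of `G` has vertices `V ⊕ Ei` (one new `δ₊` vertex in the middle of each
internal edge), internal edges `Ei ⊕ Ei` (the two halves of each original internal edge),
and external edges `Ee`.  Each (half-)edge coming from an edge `e` of `G` carries the
character group `(X e)^∧ = AddChar (X e) ℂ`; each original vertex carries the Fourier
transform of its local function, and each new vertex carries `δ₊`. -/

section DualNFG

variable {V Ei Ee : Type} (X : Ei ⊕ Ee → Type) [∀ e, AddCommGroup (X e)]
  (ends : Ei → V × V) (extEnd : Ee → V)

/-- Edge alphabets of the dual NFG: character groups. -/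
@[reducible] def Xhat : (Ei ⊕ Ei) ⊕ Ee → Type
  | .inl (.inl i) => AddChar (X (.inl i)) ℂ
  | .inl (.inr i) => AddChar (X (.inl i)) ℂ
  | .inr j => AddChar (X (.inr j)) ℂ

noncomputable instance XhatFintype [∀ e, Fintype (X e)] : ∀ e, Fintype (Xhat X e)
  | .inl (.inl i) => inferInstanceAs (Fintype (AddChar (X (.inl i)) ℂ))
  | .inl (.inr i) => inferInstanceAs (Fintype (AddChar (X (.inl i)) ℂ))
  | .inr j => inferInstanceAs (Fintype (AddChar (X (.inr j)) ℂ))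

/-- Endpoints of the internal edges of the dual NFG: `.inl i` is the half of `i` from
`(ends i).1` to the new vertex `i`, and `.inr i` the half from the new vertex `i`
to `(ends i).2`. -/
def dEnds : Ei ⊕ Ei → (V ⊕ Ei) × (V ⊕ Ei)
  | .inl i => (.inl (ends i).1, .inr i)
  | .inr i => (.inr i, .inl (ends i).2)

/-- Attachment of the external edges of the dual NFG. -/
def dExtEnd : Ee → V ⊕ Ei := fun j => .inl (extEnd j)

/-- The character attached by a dual configuration `ψ` at vertex `v` to an original edge
slot `e` incident to `v`. -/
noncomputable def charAt (v : V)
    (ψ : (e' : {e' : (Ei ⊕ Ei) ⊕ Ee //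
        Inc (dEnds ends) (dExtEnd extEnd) (.inl v) e'}) → Xhat X e'.1) :
    (e : {e : Ei ⊕ Ee // Inc ends extEnd v e}) → AddChar (X e.1) ℂ :=
  fun e =>
    match e with
    | ⟨.inl i, h⟩ =>
        if h1 : (ends i).1 = v then
          ψ ⟨.inl (.inl i), Or.inl (congrArg (Sum.inl : V → V ⊕ Ei) h1)⟩
        else
          ψ ⟨.inl (.inr i), Or.inr (congrArg (Sum.inl : V → V ⊕ Ei)
              (h.resolve_left h1))⟩
    | ⟨.inr j, h⟩ => ψ ⟨.inr j, congrArg (Sum.inl : V → V ⊕ Ei) h⟩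

/-- Local functions of the dual NFG: each original vertex `v` carries the Fourier
transform `F[f v]` of its local function, and each new vertex (one per original internal
edge) carries `δ₊`, the indicator that the two adjacent characters sum to zero (written
multiplicatively: their product is the trivial character). -/
noncomputable def dualF [Fintype Ei] [Fintype Ee] [∀ e, Fintype (X e)]
    (f : ∀ v : V, ((e : {e : Ei ⊕ Ee // Inc ends extEnd v e}) → X e.1) → ℂ) :
    ∀ w : V ⊕ Ei,
      ((e' : {e' : (Ei ⊕ Ei) ⊕ Ee //
          Inc (dEnds ends) (dExtEnd extEnd) w e'}) → Xhat X e'.1) → ℂ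
  | .inl v => fun ψ =>
      ∑ xv : (e : {e : Ei ⊕ Ee // Inc ends extEnd v e}) → X e.1,
        f v xv * ∏ e : {e : Ei ⊕ Ee // Inc ends extEnd v e},
          (charAt X ends extEnd v ψ e) (xv e)
  | .inr i => fun ψ =>
      if (ψ ⟨.inl (.inl i), Or.inr rfl⟩) * (ψ ⟨.inl (.inr i), Or.inl rfl⟩) = 1
      then 1 else 0

end DualNFG


/-! Summing out the `δ₊` vertices forces the two halves of each internal edge `i` to carry
mutually inverse characters `χ i` and `(χ i)⁻¹`.  Expanding the Fourier transforms at the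
vertices then turns `Z_Ĝ` into a sum over `χ` and over local configurations, which assign a
value to every half-edge.  If `a i` and `b i` are the values at the two ends of `i`, the
characters contribute `∏ i, χ i (a i - b i)`, and by orthogonality the sum over `χ` is
`|X_{E_int}|` when `a = b` and `0` otherwise; the surviving local configurations are exactly
the configurations of `G`. -/

section HalfEdges

variable {V Ei Ee : Type} (ends : Ei → V × V) (extEnd : Ee → V)

noncomputable def halfEdgeEquiv (hne : ∀ i : Ei, (ends i).1 ≠ (ends i).2) :
    (Ei ⊕ Ei) ⊕ Ee ≃ Σ v : V, {e : Ei ⊕ Ee // Inc ends extEnd v e} where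
  toFun
    | .inl (.inl i) => ⟨(ends i).1, .inl i, Or.inl rfl⟩
    | .inl (.inr i) => ⟨(ends i).2, .inl i, Or.inr rfl⟩
    | .inr j => ⟨extEnd j, .inr j, rfl⟩
  invFun
    | ⟨v, .inl i, _⟩ => if (ends i).1 = v then .inl (.inl i) else .inl (.inr i)
    | ⟨_, .inr j, _⟩ => .inr j
  left_inv := by
    rintro ((i | i) | j)
    · simp
    · simp [hne i]
    · rfl
  right_inv := by
    rintro ⟨v, (i | j), h⟩
    · by_cases h1 : (ends i).1 = v
      · subst h1; simp
      · obtain rfl : (ends i).2 = v := h.resolve_left h1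
        simp [h1]
    · obtain rfl : extEnd j = v := h
      rfl

theorem prod_halfEdges [Fintype V] [Fintype Ei] [Fintype Ee] {M : Type} [CommMonoid M]
    (hne : ∀ i : Ei, (ends i).1 ≠ (ends i).2)
    (h : ∀ v : V, {e : Ei ⊕ Ee // Inc ends extEnd v e} → M) :
    ∏ v, ∏ e, h v e
      = (∏ i, h (ends i).1 ⟨.inl i, Or.inl rfl⟩) * (∏ i, h (ends i).2 ⟨.inl i, Or.inr rfl⟩)
          * ∏ j, h (extEnd j) ⟨.inr j, rfl⟩ := by
  refine (Fintype.prod_sigma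
    (fun s : Σ v, {e // Inc ends extEnd v e} => h s.1 s.2)).symm.trans ?_
  rw [← (halfEdgeEquiv ends extEnd hne).prod_comp, Fintype.prod_sum_type,
    Fintype.prod_sum_type]
  rfl

variable (X : Ei ⊕ Ee → Type)

/-- Local configurations (a value on every half-edge) given edgewise: `a i` and `b i` sit at
the first and at the second end of the internal edge `i`. -/
noncomputable def localConfigEquiv (hne : ∀ i : Ei, (ends i).1 ≠ (ends i).2) :
    ((∀ i : Ei, X (.inl i)) × (∀ i : Ei, X (.inl i))) × (∀ j : Ee, X (.inr j)) ≃
      ∀ v : V, (e : {e : Ei ⊕ Ee // Inc ends extEnd v e}) → X e.1 where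
  toFun t v
    | ⟨.inl i, _⟩ => if (ends i).1 = v then t.1.1 i else t.1.2 i
    | ⟨.inr j, _⟩ => t.2 j
  invFun g :=
    ((fun i => g (ends i).1 ⟨.inl i, Or.inl rfl⟩, fun i => g (ends i).2 ⟨.inl i, Or.inr rfl⟩),
      fun j => g (extEnd j) ⟨.inr j, rfl⟩)
  left_inv := by
    rintro ⟨⟨a, b⟩, q⟩
    refine Prod.ext (Prod.ext ?_ ?_) rfl <;> funext i <;> simp [hne i]
  right_inv := by
    intro g
    funext v ⟨e, h⟩
    rcases e with i | j
    · by_cases h1 : (ends i).1 = v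
      · subst h1; simp
      · obtain rfl : (ends i).2 = v := h.resolve_left h1
        simp [h1]
    · obtain rfl : extEnd j = v := h
      rfl

variable {ends extEnd X}

@[simp] theorem localConfigEquiv_apply_fst (hne : ∀ i : Ei, (ends i).1 ≠ (ends i).2)
    (a b : ∀ i : Ei, X (.inl i)) (q : ∀ j : Ee, X (.inr j)) (i : Ei) :
    localConfigEquiv ends extEnd X hne ((a, b), q) (ends i).1 ⟨.inl i, Or.inl rfl⟩ = a i := by
  simp [localConfigEquiv]

@[simp] theorem localConfigEquiv_apply_snd (hne : ∀ i : Ei, (ends i).1 ≠ (ends i).2)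
    (a b : ∀ i : Ei, X (.inl i)) (q : ∀ j : Ee, X (.inr j)) (i : Ei) :
    localConfigEquiv ends extEnd X hne ((a, b), q) (ends i).2 ⟨.inl i, Or.inr rfl⟩ = b i := by
  simp [localConfigEquiv, hne i]

@[simp] theorem localConfigEquiv_apply_ext (hne : ∀ i : Ei, (ends i).1 ≠ (ends i).2)
    (a b : ∀ i : Ei, X (.inl i)) (q : ∀ j : Ee, X (.inr j)) (j : Ee) :
    localConfigEquiv ends extEnd X hne ((a, b), q) (extEnd j) ⟨.inr j, rfl⟩ = q j :=
  rfl

theorem localConfigEquiv_diag (hne : ∀ i : Ei, (ends i).1 ≠ (ends i).2)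
    (a : ∀ i : Ei, X (.inl i)) (q : ∀ j : Ee, X (.inr j)) :
    localConfigEquiv ends extEnd X hne ((a, a), q)
      = fun v (e : {e // Inc ends extEnd v e}) => combine a q e.1 := by
  funext v ⟨e, _⟩
  rcases e with i | j
  · simp [localConfigEquiv, combine]
  · rfl

end HalfEdges

theorem AddChar.sum_pi_prod_apply_eq_ite {ι : Type} [Fintype ι] {A : ι → Type}
    [∀ i, AddCommGroup (A i)] [∀ i, Fintype (A i)] (x : ∀ i, A i) :
    ∑ χ : ∀ i, AddChar (A i) ℂ, ∏ i, χ i (x i)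
      = if x = 0 then ∏ i, (Fintype.card (A i) : ℂ) else 0 := by
  rw [← Fintype.prod_sum (fun i (χ : AddChar (A i) ℂ) => χ (x i))]
  simp only [AddChar.sum_apply_eq_ite, Fintype.prod_ite_zero, funext_iff, Pi.zero_apply]

section Dual

variable {V Ei Ee : Type} {X : Ei ⊕ Ee → Type} [∀ e, AddCommGroup (X e)]
  {ends : Ei → V × V} {extEnd : Ee → V}

theorem charAt_fst (Ψ : ∀ e, Xhat X e) (i : Ei) :
    charAt X ends extEnd (ends i).1 (fun e => Ψ e.1) ⟨.inl i, Or.inl rfl⟩ = Ψ (.inl (.inl i)) :=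
  dif_pos rfl

theorem charAt_snd (hne : ∀ i : Ei, (ends i).1 ≠ (ends i).2) (Ψ : ∀ e, Xhat X e) (i : Ei) :
    charAt X ends extEnd (ends i).2 (fun e => Ψ e.1) ⟨.inl i, Or.inr rfl⟩ = Ψ (.inl (.inr i)) :=
  dif_neg (hne i)

theorem charAt_ext (Ψ : ∀ e, Xhat X e) (j : Ee) :
    charAt X ends extEnd (extEnd j) (fun e => Ψ e.1) ⟨.inr j, rfl⟩ = Ψ (.inr j) :=
  rfl

noncomputable def charPairing [Fintype V] [Fintype Ei] [Fintype Ee] (Ψ : ∀ e, Xhat X e)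
    (g : ∀ v : V, (e : {e : Ei ⊕ Ee // Inc ends extEnd v e}) → X e.1) : ℂ :=
  ∏ v, ∏ e, charAt X ends extEnd v (fun e' => Ψ e'.1) e (g v e)

noncomputable def halfEdgeChars (χ : ∀ i : Ei, AddChar (X (.inl i)) ℂ) :
    ∀ e : Ei ⊕ Ei, Xhat X (.inl e) :=
  (Equiv.sumPiEquivProdPi _).symm (χ, χ⁻¹)

theorem Zfun_dual_eq_sum_halfEdgeChars [Fintype V] [Fintype Ei] [Fintype Ee]
    [∀ e, Fintype (X e)]
    (f : ∀ v : V, ((e : {e : Ei ⊕ Ee // Inc ends extEnd v e}) → X e.1) → ℂ)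
    (ψe : ∀ j : Ee, AddChar (X (.inr j)) ℂ) :
    Zfun (Xhat X) (dEnds ends) (dExtEnd extEnd) (dualF X ends extEnd f) ψe
      = ∑ χ : ∀ i, AddChar (X (.inl i)) ℂ,
          ∏ v, dualF X ends extEnd f (.inl v) (fun e => combine (halfEdgeChars χ) ψe e.1) := by
  have h := (Equiv.sumPiEquivProdPi fun e : Ei ⊕ Ei => Xhat X (.inl e)).symm.sum_comp
    fun ψi => ∏ w, dualF X ends extEnd f w fun e => combine ψi ψe e.1
  rw [Fintype.sum_prod_type] at h
  unfold Zfun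
  convert h.symm using 1
  · -- `Zfun` and `h` sum over `Finset.univ` built from different `DecidableEq` instances
    congr; exact Subsingleton.elim _ _
  refine Finset.sum_congr rfl fun χ _ => ?_
  have hδ : ∀ χ' : ∀ i, AddChar (X (.inl i)) ℂ,
      ∏ i, dualF X ends extEnd f (.inr i)
          (fun e => combine ((Equiv.sumPiEquivProdPi _).symm (χ, χ')) ψe e.1)
        = if χ' = χ⁻¹ then 1 else 0 := by
    intro χ'
    simp only [dualF, Fintype.prod_boole, eq_inv_iff_mul_eq_one, mul_comm χ', funext_iff]
    rfl
  simp only [Fintype.prod_sum_type, hδ, mul_boole, Finset.sum_ite_eq', Finset.mem_univ, if_true]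
  rfl

variable [Fintype V] [Fintype Ei] [Fintype Ee]

theorem charPairing_localConfigEquiv (hne : ∀ i : Ei, (ends i).1 ≠ (ends i).2)
    (Ψ : ∀ e, Xhat X e) (a b : ∀ i : Ei, X (.inl i)) (q : ∀ j : Ee, X (.inr j)) :
    charPairing Ψ (localConfigEquiv ends extEnd X hne ((a, b), q))
      = (∏ i, Ψ (.inl (.inl i)) (a i)) * (∏ i, Ψ (.inl (.inr i)) (b i))
          * ∏ j, Ψ (.inr j) (q j) := by
  rw [charPairing, prod_halfEdges ends extEnd hne]
  simp only [charAt_fst, charAt_snd hne, charAt_ext, localConfigEquiv_apply_fst,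
    localConfigEquiv_apply_snd, localConfigEquiv_apply_ext]

theorem sum_charPairing_halfEdgeChars [∀ e, Fintype (X e)]
    (hne : ∀ i : Ei, (ends i).1 ≠ (ends i).2)
    (ψe : ∀ j : Ee, AddChar (X (.inr j)) ℂ) (a b : ∀ i : Ei, X (.inl i))
    (q : ∀ j : Ee, X (.inr j)) :
    ∑ χ : ∀ i, AddChar (X (.inl i)) ℂ,
        charPairing (combine (halfEdgeChars χ) ψe)
          (localConfigEquiv ends extEnd X hne ((a, b), q))
      = if a = b then (∏ i, (Fintype.card (X (.inl i)) : ℂ)) * ∏ j, ψe j (q j) else 0 := by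
  have hpair : ∀ χ : ∀ i, AddChar (X (.inl i)) ℂ,
      (∏ i, χ i (a i)) * ∏ i, (χ i)⁻¹ (b i) = ∏ i, χ i ((a - b) i) := fun χ => by
    rw [← Finset.prod_mul_distrib]
    simp only [AddChar.inv_apply, ← AddChar.map_add_eq_mul, Pi.sub_apply, sub_eq_add_neg]
  simp only [charPairing_localConfigEquiv]
  change ∑ χ : ∀ i, AddChar (X (.inl i)) ℂ,
      (∏ i, χ i (a i)) * (∏ i, (χ i)⁻¹ (b i)) * ∏ j, ψe j (q j) = _
  simp only [hpair, ← Finset.sum_mul, AddChar.sum_pi_prod_apply_eq_ite, sub_eq_zero, ite_mul,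
    zero_mul]

end Dual

/-- **General Normal Factor Graph Duality Theorem.**
Let `G = (V, Ei, Ee, f)` be an NFG all of whose edge alphabets `X e` are finite abelian
groups, and let `Ĝ` be the dual NFG, obtained by letting each edge carry the character
group of its alphabet, replacing each local function by its Fourier transform, and
inserting a `δ₊` vertex into each internal edge.  Then
`Z_Ĝ = |X_{E_int}| · F[Z_G]`, where `|X_{E_int}| = ∏_{internal e} |X e|` and
`F[Z_G](ψ) = ∑ x_ext, Z_G(x_ext) · ∏_{external e} ψ_e (x_e)`. -/
theorem general_nfg_duality_theorem {V Ei Ee : Type}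
    [Fintype V] [Fintype Ei] [Fintype Ee]
    (X : Ei ⊕ Ee → Type) [∀ e, AddCommGroup (X e)] [∀ e, Fintype (X e)]
    (ends : Ei → V × V) (hne : ∀ i : Ei, (ends i).1 ≠ (ends i).2)
    (extEnd : Ee → V)
    (f : ∀ v : V, ((e : {e : Ei ⊕ Ee // Inc ends extEnd v e}) → X e.1) → ℂ)
    (ψe : ∀ j : Ee, AddChar (X (.inr j)) ℂ) :
    Zfun (Xhat X) (dEnds ends) (dExtEnd extEnd) (dualF X ends extEnd f) ψe
      = (∏ i : Ei, (Fintype.card (X (.inl i)) : ℂ))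
          * ∑ xe : ∀ j : Ee, X (.inr j),
              Zfun X ends extEnd f xe * ∏ j : Ee, ψe j (xe j) := by
  let L := localConfigEquiv ends extEnd X hne
  calc _ = ∑ χ : ∀ i, AddChar (X (.inl i)) ℂ, ∑ g,
        (∏ v, f v (g v)) * charPairing (combine (halfEdgeChars χ) ψe) g := by
        simp only [Zfun_dual_eq_sum_halfEdgeChars, dualF, Fintype.prod_sum,
          Finset.prod_mul_distrib, charPairing]
    _ = ∑ t, (∏ v, f v (L t v)) * ∑ χ : ∀ i, AddChar (X (.inl i)) ℂ,
        charPairing (combine (halfEdgeChars χ) ψe) (L t) := by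
        rw [Finset.sum_comm, ← L.sum_comp]
        simp only [Finset.mul_sum]
    _ = ∑ a, ∑ q, (∏ v, f v fun e => combine a q e.1)
        * ((∏ i : Ei, (Fintype.card (X (.inl i)) : ℂ)) * ∏ j, ψe j (q j)) := by
        simp only [L, Fintype.sum_prod_type, sum_charPairing_halfEdgeChars, mul_ite, mul_zero,
          Finset.sum_ite_irrel, Finset.sum_const_zero, Finset.sum_ite_eq, Finset.mem_univ,
          if_true, localConfigEquiv_diag]
    _ = _ := by
        simp only [Zfun, Finset.mul_sum, Finset.sum_mul]
        rw [Finset.sum_comm]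
        exact Finset.sum_congr rfl fun _ _ => Finset.sum_congr rfl fun _ _ => by ring
end
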